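/- Let p be an odd prime and f a weakly regular bent function on 𝔽_q (q = p^m) with Walsh transform W_f(β) = ε √(p*)^m ζ_p^{f*(β)} for all β, where ε ∈ {1,-1}. Then the dual f* satisfies W_{f*}(-x) = (-1/p)^m ε √(p*)^m ζ_p^{f(x)} for all x ∈ 𝔽_q. -/

import Mathlib

/-! Over a finite commutative ring with a primitive additive character `ψ`, applying the
transform `u ↦ (β ↦ ∑ x, u x * ψ (β * x))` twice returns `|R|` times the reflected function, by
orthogonality of `y ↦ ψ (y * b)`. Here `ψ = ζ_p ^ Tr` is primitive because the trace of a finite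
field onto `𝔽_p` is surjective, so applying this to `W_f = ε √(p*)^m ζ_p^{f*}` gives
`ε √(p*)^m W_{f*}(-x) = p^m ζ_p^{f(x)}`; and `p^m = ε √(p*)^m · (-1/p)^m ε √(p*)^m`
because `√(p*)² = (-1/p) p`, `ε² = 1` and `(-1/p)² = 1`. -/

open Complex

noncomputable def zp (p : ℕ) : ℂ := Complex.exp (2 * Real.pi * Complex.I / p)

noncomputable def sqrtPstar (p : ℕ) : ℂ :=
  if p % 4 = 1 then (Real.sqrt p : ℂ) else (Real.sqrt p : ℂ) * Complex.I

theorem AddChar.IsPrimitive.mul_sum_dual_eq_card_mul {R K : Type*} [CommRing R] [Fintype R]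
    [Field K] {ψ : AddChar R K} (hψ : ψ.IsPrimitive)
    {u v : R → K} {c : K} (h : ∀ β, ∑ x, u x * ψ (β * x) = c * v β) (x : R) :
    c * ∑ y, v y * ψ (-x * y) = Fintype.card R * u x := by
  classical
  calc c * ∑ y, v y * ψ (-x * y)
      = ∑ y, (∑ z, u z * ψ (y * z)) * ψ (-x * y) := by
        rw [Finset.mul_sum]
        exact Finset.sum_congr rfl fun y _ => by rw [h, mul_assoc]
    _ = ∑ z, u z * ∑ y, ψ (y * (z - x)) := by
        simp_rw [Finset.sum_mul, Finset.mul_sum, mul_assoc, ← AddChar.map_add_eq_mul]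
        rw [Finset.sum_comm]
        congr! 4
        ring
    _ = Fintype.card R * u x := by
        simp [AddChar.sum_mulShift _ hψ, sub_eq_zero, mul_comm]

theorem AddChar.IsPrimitive.compAddMonoidHom_trace {k L R' : Type*} [Field k] [Field L]
    [Algebra k L] [FiniteDimensional k L] [Algebra.IsSeparable k L] [CommMonoid R']
    {ψ : AddChar k R'} (hψ : ψ.IsPrimitive) :
    (ψ.compAddMonoidHom (Algebra.trace k L).toAddMonoidHom).IsPrimitive := by
  refine AddChar.IsPrimitive.of_ne_one fun h => hψ one_ne_zero ?_
  ext c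
  obtain ⟨b, rfl⟩ := Algebra.trace_surjective k L c
  simpa using DFunLike.congr_fun h b

section Constants

variable {p : ℕ} [hp : Fact p.Prime]

theorem zp_isPrimitiveRoot : IsPrimitiveRoot (zp p) p :=
  Complex.isPrimitiveRoot_exp p hp.out.ne_zero

variable (p) in
noncomputable def zpChar : AddChar (ZMod p) ℂ :=
  AddChar.zmodChar p zp_isPrimitiveRoot.pow_eq_one

theorem zpChar_isPrimitive : (zpChar p).IsPrimitive :=
  AddChar.zmodChar_primitive_of_primitive_root p zp_isPrimitiveRoot

theorem zp_pow_val_add (a b : ZMod p) : zp p ^ (a + b).val = zp p ^ a.val * zp p ^ b.val :=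
  AddChar.map_add_eq_mul (zpChar p) a b

theorem sqrtPstar_sq (hp2 : p ≠ 2) : sqrtPstar p ^ 2 = legendreSym p (-1) * p := by
  have hsq : (Real.sqrt p : ℂ) ^ 2 = p := by
    rw [← Complex.ofReal_pow, Real.sq_sqrt p.cast_nonneg, Complex.ofReal_natCast]
  rw [legendreSym.at_neg_one hp2, sqrtPstar]
  rcases Nat.odd_mod_four_iff.mp (hp.out.mod_two_eq_one_iff_ne_two.mpr hp2) with h4 | h4
  · rw [if_pos h4, ZMod.χ₄_nat_one_mod_four h4, hsq]; push_cast; ring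
  · rw [if_neg (by omega), ZMod.χ₄_nat_three_mod_four h4, mul_pow, hsq, Complex.I_sq]
    push_cast; ring

theorem legendreSym_neg_one_sq : (legendreSym p (-1) : ℂ) ^ 2 = 1 := by
  exact_mod_cast legendreSym.sq_one p (by simp)

theorem sign_mul_sqrtPstar_pow_mul_eq_pow (m : ℕ) (hp2 : p ≠ 2) {ε : ℂ} (hε : ε ^ 2 = 1) :
    ε * sqrtPstar p ^ m * ((legendreSym p (-1) : ℂ) ^ m * ε * sqrtPstar p ^ m) = (p : ℂ) ^ m := by
  calc ε * sqrtPstar p ^ m * ((legendreSym p (-1) : ℂ) ^ m * ε * sqrtPstar p ^ m)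
      = ε ^ 2 * (legendreSym p (-1) : ℂ) ^ m * (sqrtPstar p ^ 2) ^ m := by ring
    _ = ((legendreSym p (-1) : ℂ) ^ 2) ^ m * (p : ℂ) ^ m := by
        rw [sqrtPstar_sq hp2, hε]; ring
    _ = (p : ℂ) ^ m := by rw [legendreSym_neg_one_sq, one_pow, one_mul]

end Constants

theorem stmt_8_general (p m : ℕ) [Fact p.Prime] (hp2 : p ≠ 2)
    (F : Type) [Field F] [Fintype F] [Algebra (ZMod p) F]
    (hcard : Fintype.card F = p ^ m)
    (f fstar : F → ZMod p) (ε : ℤ) (hε : ε = 1 ∨ ε = -1)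
    (hW : ∀ β : F, ∑ x : F, zp p ^ (f x + Algebra.trace (ZMod p) F (β * x)).val
      = (ε : ℂ) * sqrtPstar p ^ m * zp p ^ (fstar β).val) :
    ∀ x : F, ∑ y : F, zp p ^ (fstar y + Algebra.trace (ZMod p) F ((-x) * y)).val
      = (legendreSym p (-1) : ℂ) ^ m * (ε : ℂ) * sqrtPstar p ^ m * zp p ^ (f x).val := by
  intro x
  set ψ := (zpChar p).compAddMonoidHom (Algebra.trace (ZMod p) F).toAddMonoidHom
  have hψ : ψ.IsPrimitive := zpChar_isPrimitive.compAddMonoidHom_trace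
  have hψ_apply (a : F) : zp p ^ (Algebra.trace (ZMod p) F a).val = ψ a := rfl
  have hε2 : (ε : ℂ) ^ 2 = 1 := by rcases hε with rfl | rfl <;> norm_num
  have hconst := sign_mul_sqrtPstar_pow_mul_eq_pow m hp2 hε2
  have hc : (ε : ℂ) * sqrtPstar p ^ m ≠ 0 :=
    left_ne_zero_of_mul (hconst.trans_ne (pow_ne_zero _ (Nat.cast_ne_zero.mpr NeZero.out)))
  have hdual := hψ.mul_sum_dual_eq_card_mul (u := fun x => zp p ^ (f x).val)
    (fun β => by simpa only [zp_pow_val_add, hψ_apply] using hW β) x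
  rw [hcard, Nat.cast_pow, ← hconst] at hdual
  simp only [zp_pow_val_add, hψ_apply]
  exact mul_left_cancel₀ hc (hdual.trans (by ring))

theorem stmt_8 (p m : ℕ) [Fact p.Prime] (hp2 : p ≠ 2) (hm : 0 < m)
    (F : Type) [Field F] [Fintype F] [Algebra (ZMod p) F]
    (hcard : Fintype.card F = p ^ m)
    (f fstar : F → ZMod p) (ε : ℤ) (hε : ε = 1 ∨ ε = -1)
    (hW : ∀ β : F, ∑ x : F, zp p ^ (f x + Algebra.trace (ZMod p) F (β * x)).val
      = (ε : ℂ) * sqrtPstar p ^ m * zp p ^ (fstar β).val) :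
    ∀ x : F, ∑ y : F, zp p ^ (fstar y + Algebra.trace (ZMod p) F ((-x) * y)).val
      = (legendreSym p (-1) : ℂ) ^ m * (ε : ℂ) * sqrtPstar p ^ m * zp p ^ (f x).val :=
  stmt_8_general p m hp2 F hcard f fstar ε hε hW
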